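/- Let C be a nonempty closed convex subset of a real Hilbert space H and T a κ-strict pseudo-contraction of C into itself with 0 ≤ κ < 1 and F(T) ≠ ∅. Fix x ∈ C and α ∈ (0,1], set y = (1−α)x + αTx. If u ∈ C satisfies ‖y − u‖² ≤ ‖x − u‖² + α(κ − (1−α))‖x − Tx‖², then ‖x − Tx‖ ≤ (2/(1−κ))‖x − u‖. -/

import Mathlib

/-! Since `y - u = (x - u) - α • (x - T x)`, expanding the square turns the hypothesis into
`(1 - κ) ‖x - T x‖² ≤ 2 ⟪x - u, x - T x⟫`, and Cauchy–Schwarz bounds the right side by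
`2 ‖x - u‖ ‖x - T x‖`. -/

open RealInnerProductSpace

section InnerProductSpace

variable {H : Type*} [NormedAddCommGroup H] [InnerProductSpace ℝ H]

theorem norm_sub_smul_sq (a d : H) (α : ℝ) :
    ‖a - α • d‖ ^ 2 = ‖a‖ ^ 2 - 2 * α * ⟪a, d⟫ + α ^ 2 * ‖d‖ ^ 2 := by
  rw [norm_sub_sq_real, real_inner_smul_right, norm_smul, mul_pow, Real.norm_eq_abs, sq_abs]
  ring

theorem mul_norm_sq_le_two_inner_of_norm_sub_smul_sq_le {a d : H} {α κ : ℝ} (hα : 0 < α)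
    (h : ‖a - α • d‖ ^ 2 ≤ ‖a‖ ^ 2 + α * (κ - (1 - α)) * ‖d‖ ^ 2) :
    (1 - κ) * ‖d‖ ^ 2 ≤ 2 * ⟪a, d⟫ := by
  rw [norm_sub_smul_sq] at h
  have hα_mul : α * ((1 - κ) * ‖d‖ ^ 2) ≤ α * (2 * ⟪a, d⟫) := by linarith
  exact le_of_mul_le_mul_left hα_mul hα

theorem mul_norm_le_of_mul_norm_sq_le_inner {a d : H} {c : ℝ} (h : c * ‖d‖ ^ 2 ≤ ⟪a, d⟫) :
    c * ‖d‖ ≤ ‖a‖ := by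
  rcases (norm_nonneg d).eq_or_lt with hd | hd
  · rw [← hd, mul_zero]
    exact norm_nonneg a
  · have h_cs : c * ‖d‖ * ‖d‖ ≤ ‖a‖ * ‖d‖ := by
      nlinarith [real_inner_le_norm a d]
    exact le_of_mul_le_mul_right h_cs hd

end InnerProductSpace

theorem strict_pseudo_contraction_Cx_subset_general
    {H : Type*} [NormedAddCommGroup H] [InnerProductSpace ℝ H]
    (T : H → H)
    (κ : ℝ) (hκ1 : κ < 1)
    (x : H) (α : ℝ) (hα0 : 0 < α)
    (y : H) (hy : y = (1 - α) • x + α • T x)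
    (u : H)
    (huC : ‖y - u‖ ^ 2 ≤ ‖x - u‖ ^ 2 + α * (κ - (1 - α)) * ‖x - T x‖ ^ 2) :
    ‖x - T x‖ ≤ (2 / (1 - κ)) * ‖x - u‖ := by
  have hyu : y - u = (x - u) - α • (x - T x) := by
    rw [hy]; module
  rw [hyu] at huC
  have h_inner := mul_norm_sq_le_two_inner_of_norm_sub_smul_sq_le hα0 huC
  have h_half : (1 - κ) / 2 * ‖x - T x‖ ≤ ‖x - u‖ :=
    mul_norm_le_of_mul_norm_sq_le_inner (by linarith)
  rw [div_mul_eq_mul_div, le_div_iff₀ (by linarith)]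
  linarith

theorem strict_pseudo_contraction_Cx_subset
    {H : Type*} [NormedAddCommGroup H] [InnerProductSpace ℝ H] [CompleteSpace H]
    (C : Set H) (hC : IsClosed C) (hCconv : Convex ℝ C) (hCne : C.Nonempty)
    (T : H → H) (hT : ∀ x ∈ C, T x ∈ C)
    (κ : ℝ) (hκ0 : 0 ≤ κ) (hκ1 : κ < 1)
    (hspc : ∀ x ∈ C, ∀ y ∈ C,
      ‖T x - T y‖ ^ 2 ≤ ‖x - y‖ ^ 2 + κ * ‖(x - T x) - (y - T y)‖ ^ 2)
    (hF : ∃ p ∈ C, T p = p)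
    (x : H) (hx : x ∈ C) (α : ℝ) (hα0 : 0 < α) (hα1 : α ≤ 1)
    (y : H) (hy : y = (1 - α) • x + α • T x)
    (u : H) (hu : u ∈ C)
    (huC : ‖y - u‖ ^ 2 ≤ ‖x - u‖ ^ 2 + α * (κ - (1 - α)) * ‖x - T x‖ ^ 2) :
    ‖x - T x‖ ≤ (2 / (1 - κ)) * ‖x - u‖ :=
  strict_pseudo_contraction_Cx_subset_general T κ hκ1 x α hα0 y hy u huC
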